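/- arXiv:2407.09524 — 3 statements merged into one kernel-verified Lean document; each statement's English description precedes it below -/
import Mathlib

section
/- For matrices A and B with the same number of rows, if the column spaces of A and B are orthogonal (every column of A is orthogonal to every column of B), then ‖[A,B]‖_* = ‖A‖_* + ‖B‖_*. -/
open Matrix BigOperators

/-- The singular values of a real `d × n` matrix, defined as the square roots of the
eigenvalues of `M * Mᴴ`. -/
noncomputable def singularValues {d : ℕ} {n : Type*} [Fintype n]
    (M : Matrix (Fin d) n ℝ) : Fin d → ℝ :=
  fun i => Real.sqrt ((Matrix.isHermitian_mul_conjTranspose_self M).eigenvalues i)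

/-- The nuclear norm (sum of singular values). -/
noncomputable def nuclearNorm {d : ℕ} {n : Type*} [Fintype n]
    (M : Matrix (Fin d) n ℝ) : ℝ :=
  ∑ i, singularValues M i

/-- The column space of a matrix: the span of its columns. -/
def colSpace {d : ℕ} {n : Type*} (M : Matrix (Fin d) n ℝ) : Submodule ℝ (Fin d → ℝ) :=
  Submodule.span ℝ (Set.range fun j => fun i => M i j)

/-! The nuclear norm is `tr √(M Mᴴ)`. For `M = [A, B]` one has `M Mᴴ = A Aᴴ + B Bᴴ`, and
orthogonality of the column spaces gives `(A Aᴴ)(B Bᴴ) = 0`. Positive semidefinite matrices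
with vanishing product have additive square roots, and the trace is additive. -/

section

open scoped MatrixOrder ComplexOrder

namespace Matrix

variable {𝕜 : Type*} [RCLike 𝕜] {n : Type*} [Fintype n] [DecidableEq n]

lemma IsHermitian.trace_cfc {A : Matrix n n 𝕜} (hA : A.IsHermitian) (f : ℝ → ℝ) :
    (cfc f A).trace = ∑ i, (f (hA.eigenvalues i) : 𝕜) := by
  rw [hA.cfc_eq, IsHermitian.cfc, Unitary.conjStarAlgAut_apply, trace_mul_cycle,
    Unitary.coe_star_mul_self, one_mul, trace_diagonal]
  rfl

/-- `X = √P √Q` satisfies `tr (X Xᴴ) = tr (√P Q √P) = tr (P Q) = 0`. -/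
lemma sqrt_mul_sqrt_eq_zero {P Q : Matrix n n 𝕜} (hP : 0 ≤ P) (hQ : 0 ≤ Q) (hPQ : P * Q = 0) :
    CFC.sqrt P * CFC.sqrt Q = 0 := by
  have hsP := (nonneg_iff_posSemidef.mp (CFC.sqrt_nonneg P)).isHermitian
  have hsQ := (nonneg_iff_posSemidef.mp (CFC.sqrt_nonneg Q)).isHermitian
  rw [← trace_mul_conjTranspose_self_eq_zero_iff, conjTranspose_mul, hsP.eq, hsQ.eq,
    show CFC.sqrt P * CFC.sqrt Q * (CFC.sqrt Q * CFC.sqrt P)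
      = CFC.sqrt P * (CFC.sqrt Q * CFC.sqrt Q) * CFC.sqrt P by simp only [mul_assoc],
    CFC.sqrt_mul_sqrt_self Q, trace_mul_cycle, CFC.sqrt_mul_sqrt_self P, hPQ, trace_zero]

lemma sqrt_add_of_mul_eq_zero {P Q : Matrix n n 𝕜} (hP : 0 ≤ P) (hQ : 0 ≤ Q) (hPQ : P * Q = 0) :
    CFC.sqrt (P + Q) = CFC.sqrt P + CFC.sqrt Q := by
  have hQP : Q * P = 0 := by
    simpa [(nonneg_iff_posSemidef.mp hP).isHermitian.eq,
      (nonneg_iff_posSemidef.mp hQ).isHermitian.eq] using congrArg conjTranspose hPQ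
  refine CFC.sqrt_unique ?_ (add_nonneg (CFC.sqrt_nonneg P) (CFC.sqrt_nonneg Q))
  rw [add_mul, mul_add, mul_add, sqrt_mul_sqrt_eq_zero hP hQ hPQ,
    sqrt_mul_sqrt_eq_zero hQ hP hQP, CFC.sqrt_mul_sqrt_self P, CFC.sqrt_mul_sqrt_self Q,
    add_zero, zero_add]

end Matrix

variable {d : ℕ} {k l : Type*} [Fintype k] [Fintype l]

lemma nuclearNorm_eq_trace_sqrt (M : Matrix (Fin d) k ℝ) :
    nuclearNorm M = (CFC.sqrt (M * Mᴴ)).trace := by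
  rw [CFC.sqrt_eq_real_sqrt _ (posSemidef_self_mul_conjTranspose M).nonneg, cfcₙ_eq_cfc,
    (isHermitian_mul_conjTranspose_self M).trace_cfc]
  rfl

lemma nuclearNorm_fromCols_of_conjTranspose_mul_eq_zero {A : Matrix (Fin d) k ℝ}
    {B : Matrix (Fin d) l ℝ} (hAB : Aᴴ * B = 0) :
    nuclearNorm (fromCols A B) = nuclearNorm A + nuclearNorm B := by
  have hPQ : A * Aᴴ * (B * Bᴴ) = 0 := by
    rw [Matrix.mul_assoc, ← Matrix.mul_assoc Aᴴ, hAB, Matrix.zero_mul, Matrix.mul_zero]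
  rw [nuclearNorm_eq_trace_sqrt, nuclearNorm_eq_trace_sqrt, nuclearNorm_eq_trace_sqrt,
    conjTranspose_fromCols_eq_fromRows_conjTranspose, fromCols_mul_fromRows,
    sqrt_add_of_mul_eq_zero (posSemidef_self_mul_conjTranspose A).nonneg
      (posSemidef_self_mul_conjTranspose B).nonneg hPQ, trace_add]

end

theorem nuclearNorm_fromColumns_eq_of_orthogonal {d n m : ℕ}
    (A : Matrix (Fin d) (Fin n) ℝ) (B : Matrix (Fin d) (Fin m) ℝ)
    (horth : ∀ (j : Fin n) (j' : Fin m), ∑ i, A i j * B i j' = 0) :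
    nuclearNorm (Matrix.fromCols A B) = nuclearNorm A + nuclearNorm B :=
  nuclearNorm_fromCols_of_conjTranspose_mul_eq_zero <| by
    ext j j'
    simpa [mul_apply] using horth j j'
end

section
/- For A ∈ ℝ^{d×n}, B ∈ ℝ^{d×m} with d ≤ min{n,m} and ‖A‖_σ ≤ α, ‖B‖_σ ≤ α, equality ‖A‖_* + ‖B‖_* − ‖[A,B]‖_* = (2−√2) α d holds if and only if ‖A‖_* = ‖B‖_* = α d. -/
open Matrix BigOperators

/-!
Trace duality: `tr (C Mᵀ) ≤ ‖C‖_*` for every contraction `M`, by Cauchy–Schwarz row by row after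
rotating into the left singular basis of `C`, and equality holds for the contraction
`(C Cᵀ)^{+1/2} C`. Gluing the optimal contractions `U_A`, `U_B` into `[U_A, U_B] / √2` gives
`‖A‖_* + ‖B‖_* ≤ √2 ‖[A, B]‖_*`; since also `‖A‖_*, ‖B‖_* ≤ α d`, a defect of `(2 - √2) α d`
forces both to equal `α d`. Conversely `‖A‖_* = α d` forces all singular values of `A` to be `α`,
so `A Aᵀ = B Bᵀ = α² I`, `[A, B] [A, B]ᵀ = 2 α² I`, and `‖[A, B]‖_* = √2 α d`.
-/

section

variable {d : ℕ} {k : Type*} [Fintype k]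

noncomputable def leftSingularVectors (M : Matrix (Fin d) k ℝ) : Matrix (Fin d) (Fin d) ℝ :=
  (isHermitian_mul_conjTranspose_self M).eigenvectorUnitary

lemma leftSingularVectors_mem_unitaryGroup (M : Matrix (Fin d) k ℝ) :
    leftSingularVectors M ∈ unitaryGroup (Fin d) ℝ :=
  (isHermitian_mul_conjTranspose_self M).eigenvectorUnitary.2

lemma singularValues_nonneg (M : Matrix (Fin d) k ℝ) (i : Fin d) : 0 ≤ singularValues M i :=
  Real.sqrt_nonneg _

lemma sq_singularValues (M : Matrix (Fin d) k ℝ) (i : Fin d) :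
    singularValues M i ^ 2 = (isHermitian_mul_conjTranspose_self M).eigenvalues i :=
  Real.sq_sqrt (eigenvalues_self_mul_conjTranspose_nonneg M i)

lemma star_leftSingularVectors_mul_mul_conjTranspose_mul_eq_diagonal (M : Matrix (Fin d) k ℝ) :
    star (leftSingularVectors M) * (M * Mᴴ) * leftSingularVectors M =
      diagonal fun i => singularValues M i ^ 2 := by
  have := (isHermitian_mul_conjTranspose_self M).conjStarAlgAut_star_eigenvectorUnitary
  rw [Unitary.conjStarAlgAut_star_apply] at this
  simp only [sq_singularValues]
  exact this

lemma trace_mul_conjTranspose_le_sum_sqrt {m n : Type*} [Fintype m] [Fintype n]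
    (X Y : Matrix m n ℝ) :
    trace (X * Yᴴ) ≤ ∑ i, √((X * Xᴴ) i i) * √((Y * Yᴴ) i i) := by
  have hdiag : ∀ (Z : Matrix m n ℝ) i, (Z * Zᴴ) i i = ∑ j, Z i j ^ 2 := by
    intro Z i
    simp [mul_apply, sq]
  simp only [hdiag, trace, diag, mul_apply, conjTranspose_apply, star_trivial]
  exact Finset.sum_le_sum fun i _ => Real.sum_mul_le_sqrt_mul_sqrt _ _ _

lemma star_mul_mul_conjTranspose_star_mul {m n : Type*} [Fintype m] [Fintype n]
    (W : Matrix m m ℝ) (X Y : Matrix m n ℝ) :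
    (star W * X) * (star W * Y)ᴴ = star W * (X * Yᴴ) * W := by
  rw [conjTranspose_mul, star_eq_conjTranspose, conjTranspose_conjTranspose]
  simp only [Matrix.mul_assoc]

lemma trace_mul_conjTranspose_le_nuclearNorm (C M : Matrix (Fin d) k ℝ)
    (hM : (1 - M * Mᴴ).PosSemidef) :
    trace (C * Mᴴ) ≤ nuclearNorm C := by
  set W := leftSingularVectors C
  have hW := leftSingularVectors_mem_unitaryGroup C
  have hC : ∀ i, √(((star W * C) * (star W * C)ᴴ) i i) = singularValues C i := by
    intro i
    rw [star_mul_mul_conjTranspose_star_mul,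
      star_leftSingularVectors_mul_mul_conjTranspose_mul_eq_diagonal, diagonal_apply_eq,
      Real.sqrt_sq (singularValues_nonneg C i)]
  have hM' : ∀ i, √(((star W * M) * (star W * M)ᴴ) i i) ≤ 1 := by
    intro i
    have := (hM.conjTranspose_mul_mul_same W).diag_nonneg (i := i)
    rw [← star_eq_conjTranspose, Matrix.mul_sub, Matrix.sub_mul, Matrix.mul_one,
      mem_unitaryGroup_iff'.mp hW, Matrix.sub_apply, one_apply_eq, sub_nonneg] at this
    rwa [Real.sqrt_le_one, star_mul_mul_conjTranspose_star_mul]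
  calc trace (C * Mᴴ) = trace ((star W * C) * (star W * M)ᴴ) := by
        rw [star_mul_mul_conjTranspose_star_mul, trace_mul_cycle, mem_unitaryGroup_iff.mp hW,
          one_mul]
    _ ≤ ∑ i, singularValues C i * √(((star W * M) * (star W * M)ᴴ) i i) := by
        simpa only [hC] using trace_mul_conjTranspose_le_sum_sqrt (star W * C) (star W * M)
    _ ≤ ∑ i, singularValues C i := Finset.sum_le_sum fun i _ =>
        mul_le_of_le_one_right (singularValues_nonneg C i) (hM' i)

lemma exists_contraction_trace_mul_conjTranspose_eq_nuclearNorm (A : Matrix (Fin d) k ℝ) :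
    ∃ U : Matrix (Fin d) k ℝ, (1 - U * Uᴴ).PosSemidef ∧ trace (A * Uᴴ) = nuclearNorm A := by
  set W := leftSingularVectors A
  have hW := leftSingularVectors_mem_unitaryGroup A
  set σ := singularValues A
  set R := star W * A
  -- `0⁻¹ = 0` makes `W * (D * R)` a partial isometry even when `A` is rank deficient.
  set D : Matrix (Fin d) (Fin d) ℝ := diagonal σ⁻¹
  have hR : R * Rᴴ = diagonal fun i => σ i ^ 2 := by
    rw [star_mul_mul_conjTranspose_star_mul,
      star_leftSingularVectors_mul_mul_conjTranspose_mul_eq_diagonal]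
  have hD : Dᴴ = D := by simp [D]
  have hUU : (W * (D * R)) * (W * (D * R))ᴴ = W * (D * (R * Rᴴ) * D) * Wᴴ := by
    simp only [conjTranspose_mul, hD, Matrix.mul_assoc]
  refine ⟨W * (D * R), ?_, ?_⟩
  · have hdiag : 1 - D * (R * Rᴴ) * D = diagonal fun i => 1 - (σ i)⁻¹ * σ i ^ 2 * (σ i)⁻¹ := by
      rw [hR, diagonal_mul_diagonal, diagonal_mul_diagonal, ← diagonal_one, diagonal_sub]
      rfl
    have hnonneg : ∀ i, 0 ≤ 1 - (σ i)⁻¹ * σ i ^ 2 * (σ i)⁻¹ := by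
      intro i
      by_cases h : σ i = 0
      · simp [h]
      · rw [sq, inv_mul_cancel_left₀ h, mul_inv_cancel₀ h, sub_self]
    have := (posSemidef_diagonal_iff.mpr hnonneg).mul_mul_conjTranspose_same W
    rwa [← hdiag, Matrix.mul_sub, Matrix.sub_mul, Matrix.mul_one, ← star_eq_conjTranspose,
      mem_unitaryGroup_iff.mp hW, star_eq_conjTranspose, ← hUU] at this
  · calc trace (A * (W * (D * R))ᴴ) = trace (R * Rᴴ * D) := by
          simp only [conjTranspose_mul, hD, R, star_eq_conjTranspose, conjTranspose_conjTranspose]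
          simp only [← Matrix.mul_assoc]
          rw [trace_mul_comm]
          simp only [Matrix.mul_assoc]
      _ = nuclearNorm A := by
          rw [hR, diagonal_mul_diagonal, trace_diagonal]
          exact Finset.sum_congr rfl fun i _ => by rw [Pi.inv_apply, sq, mul_self_mul_inv]

lemma fromCols_mul_conjTranspose_fromCols {m n₁ n₂ : Type*} [Fintype n₁] [Fintype n₂]
    (A X : Matrix m n₁ ℝ) (B Y : Matrix m n₂ ℝ) :
    fromCols A B * (fromCols X Y)ᴴ = A * Xᴴ + B * Yᴴ := by
  rw [conjTranspose_fromCols_eq_fromRows_conjTranspose, fromCols_mul_fromRows]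

lemma nuclearNorm_add_nuclearNorm_le_sqrt_two_mul_nuclearNorm_fromCols {l : Type*} [Fintype l]
    (A : Matrix (Fin d) k ℝ) (B : Matrix (Fin d) l ℝ) :
    nuclearNorm A + nuclearNorm B ≤ √2 * nuclearNorm (fromCols A B) := by
  obtain ⟨UA, hUA, htA⟩ := exists_contraction_trace_mul_conjTranspose_eq_nuclearNorm A
  obtain ⟨UB, hUB, htB⟩ := exists_contraction_trace_mul_conjTranspose_eq_nuclearNorm B
  set N := (√2)⁻¹ • fromCols UA UB
  have hsqrt : (√2)⁻¹ * (√2)⁻¹ = (2 : ℝ)⁻¹ := by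
    rw [← mul_inv, Real.mul_self_sqrt zero_le_two]
  have hN : 1 - N * Nᴴ = (2 : ℝ)⁻¹ • ((1 - UA * UAᴴ) + (1 - UB * UBᴴ)) := by
    simp only [N, conjTranspose_smul, star_trivial, Matrix.smul_mul, Matrix.mul_smul, smul_smul,
      hsqrt, fromCols_mul_conjTranspose_fromCols]
    module
  have hle := trace_mul_conjTranspose_le_nuclearNorm (fromCols A B) N
    (hN ▸ (hUA.add hUB).smul (by positivity))
  simp only [N, conjTranspose_smul, star_trivial, Matrix.mul_smul, trace_smul,
    fromCols_mul_conjTranspose_fromCols, trace_add, htA, htB, smul_eq_mul] at hle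
  rwa [inv_mul_le_iff₀ (by positivity)] at hle

lemma nuclearNorm_le_of_singularValues_le {α : ℝ} {M : Matrix (Fin d) k ℝ}
    (h : ∀ i, singularValues M i ≤ α) : nuclearNorm M ≤ α * d := by
  simpa [nuclearNorm, mul_comm] using Finset.sum_le_sum fun i (_ : i ∈ Finset.univ) => h i

lemma singularValues_eq_of_nuclearNorm_eq {α : ℝ} {M : Matrix (Fin d) k ℝ}
    (h : ∀ i, singularValues M i ≤ α) (hM : nuclearNorm M = α * d) (i : Fin d) :
    singularValues M i = α := by
  have hsum : ∑ i, singularValues M i = ∑ _i : Fin d, α := by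
    simpa [nuclearNorm, mul_comm] using hM
  exact (Finset.sum_eq_sum_iff_of_le fun i _ => h i).mp hsum i (Finset.mem_univ i)

lemma mul_conjTranspose_eq_smul_one_of_singularValues_eq {s : ℝ} {M : Matrix (Fin d) k ℝ}
    (h : ∀ i, singularValues M i = s) : M * Mᴴ = s ^ 2 • 1 := by
  set W := leftSingularVectors M
  have hWW : W * star W = 1 := mem_unitaryGroup_iff.mp (leftSingularVectors_mem_unitaryGroup M)
  have hdiag := star_leftSingularVectors_mul_mul_conjTranspose_mul_eq_diagonal M
  simp only [h, ← smul_one_eq_diagonal] at hdiag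
  calc M * Mᴴ = (W * star W) * (M * Mᴴ) * (W * star W) := by
        rw [hWW, Matrix.one_mul, Matrix.mul_one]
    _ = W * (star W * (M * Mᴴ) * W) * star W := by simp only [Matrix.mul_assoc]
    _ = s ^ 2 • 1 := by rw [hdiag, Matrix.mul_smul, Matrix.mul_one, Matrix.smul_mul, hWW]

lemma singularValues_eq_sqrt_of_mul_conjTranspose_eq_smul_one {c : ℝ} {M : Matrix (Fin d) k ℝ}
    (h : M * Mᴴ = c • 1) (i : Fin d) : singularValues M i = √c := by
  have hdiag := star_leftSingularVectors_mul_mul_conjTranspose_mul_eq_diagonal M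
  rw [h, Matrix.mul_smul, Matrix.mul_one, Matrix.smul_mul,
    mem_unitaryGroup_iff'.mp (leftSingularVectors_mem_unitaryGroup M), smul_one_eq_diagonal]
    at hdiag
  rw [congrFun (diagonal_injective hdiag) i, Real.sqrt_sq (singularValues_nonneg M i)]

lemma nuclearNorm_fromCols_of_singularValues_eq {l : Type*} [Fintype l] {s : ℝ}
    {A : Matrix (Fin d) k ℝ} {B : Matrix (Fin d) l ℝ}
    (hA : ∀ i, singularValues A i = s) (hB : ∀ i, singularValues B i = s) :
    nuclearNorm (fromCols A B) = √2 * s * d := by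
  have hAA := mul_conjTranspose_eq_smul_one_of_singularValues_eq hA
  have hCC : fromCols A B * (fromCols A B)ᴴ = (2 * s ^ 2) • 1 := by
    rw [fromCols_mul_conjTranspose_fromCols, hAA,
      mul_conjTranspose_eq_smul_one_of_singularValues_eq hB, ← add_smul, two_mul]
  have hC : ∀ i, singularValues (fromCols A B) i = √2 * s := fun i => by
    rw [singularValues_eq_sqrt_of_mul_conjTranspose_eq_smul_one hCC, Real.sqrt_mul zero_le_two,
      ← singularValues_eq_sqrt_of_mul_conjTranspose_eq_smul_one hAA i, hA i]
  simp [nuclearNorm, hC, mul_comm]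

end

theorem transferability_eq_iff_general {d n m : ℕ} {α : ℝ}
    (A : Matrix (Fin d) (Fin n) ℝ) (B : Matrix (Fin d) (Fin m) ℝ)
    (hA : ∀ i, singularValues A i ≤ α) (hB : ∀ i, singularValues B i ≤ α) :
    nuclearNorm A + nuclearNorm B - nuclearNorm (Matrix.fromCols A B) =
        (2 - Real.sqrt 2) * α * d ↔
      nuclearNorm A = α * d ∧ nuclearNorm B = α * d := by
  have hsqrt_sq : √2 * √2 = 2 := Real.mul_self_sqrt zero_le_two
  have hsqrt_gt : 1 < √2 := by
    rw [Real.lt_sqrt zero_le_one]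
    norm_num
  constructor
  · intro h
    have hAB := nuclearNorm_add_nuclearNorm_le_sqrt_two_mul_nuclearNorm_fromCols A B
    have hA' := nuclearNorm_le_of_singularValues_le hA
    have hB' := nuclearNorm_le_of_singularValues_le hB
    have hsum : 0 ≤ (√2 - 1) * (nuclearNorm A + nuclearNorm B - 2 * (α * d)) := by
      linear_combination hAB + (α * d) * hsqrt_sq - √2 * h
    have hsum' := (mul_nonneg_iff_of_pos_left (sub_pos.mpr hsqrt_gt)).mp hsum
    constructor <;> linarith
  · rintro ⟨hnA, hnB⟩
    rw [nuclearNorm_fromCols_of_singularValues_eq (singularValues_eq_of_nuclearNorm_eq hA hnA)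
      (singularValues_eq_of_nuclearNorm_eq hB hnB), hnA, hnB]
    ring

theorem transferability_eq_iff {d n m : ℕ} {α : ℝ}
    (A : Matrix (Fin d) (Fin n) ℝ) (B : Matrix (Fin d) (Fin m) ℝ)
    (hdn : d ≤ n) (hdm : d ≤ m) (hα : 0 < α)
    (hA : ∀ i, singularValues A i ≤ α) (hB : ∀ i, singularValues B i ≤ α) :
    nuclearNorm A + nuclearNorm B - nuclearNorm (Matrix.fromCols A B) =
        (2 - Real.sqrt 2) * α * d ↔
      nuclearNorm A = α * d ∧ nuclearNorm B = α * d :=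
  transferability_eq_iff_general A B hA hB
end

section
/- Let Z₁,...,Z_k be matrices in ℝ^{d×nᵢ} each with spectral norm at most α, and let Z = [Z₁,...,Z_k] be their concatenation. Then the quantity λ·Σᵢ(‖Zᵢˢ‖_* + ‖Zᵢᵗ‖_* − ‖Zᵢ‖_*) is at most λ(2−√2)αkd for any λ ≥ 0, where each Zᵢ = [Zᵢˢ, Zᵢᵗ] with ‖Zᵢˢ‖_σ, ‖Zᵢᵗ‖_σ ≤ α. -/
open Matrix BigOperators

/-!
For one class write `a`, `b`, `c` for the eigenvalues of `A Aᴴ`, `B Bᴴ` and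
`A Aᴴ + B Bᴴ = [A B] [A B]ᴴ`, with `a` and `c` sorted increasingly. Then `0 ≤ a, b ≤ α²`,
`a_j ≤ c_j` (Weyl monotonicity, since `B Bᴴ` is positive semidefinite), `c ≤ 2α²`, and
`∑ c = ∑ a + ∑ b` (trace). For such numbers
`√a + √b - √c ≤ (2 - √2) α + (a + b - c) / ((1 + √2) α)`, a tangent-plane bound that is tight
at `a = b = α²`, `c = 2α²`; summed over `j` the linear correction vanishes by the trace identity,
leaving `(2 - √2) α d` per class.
-/

lemma sqrt_add_sqrt_sub_sqrt_le {a b c α : ℝ} (hα : 0 < α) (ha0 : 0 ≤ a) (hb0 : 0 ≤ b)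
    (ha : a ≤ α ^ 2) (hb : b ≤ α ^ 2) (hac : a ≤ c) (hc : c ≤ 2 * α ^ 2) :
    √a + √b - √c ≤ (2 - √2) * α + (a + b - c) / ((1 + √2) * α) := by
  have hr : √2 ^ 2 = 2 := Real.sq_sqrt zero_le_two
  have hsa : √a ≤ α := (Real.sqrt_le_left hα.le).mpr ha
  have hsb : √b ≤ α := (Real.sqrt_le_left hα.le).mpr hb
  have hsc : √c ≤ √2 * α :=
    (Real.sqrt_le_left (by positivity)).mpr (by rwa [mul_pow, hr])
  have hac' : √a ≤ √c := Real.sqrt_le_sqrt hac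
  have hb' : √b ≤ √2 * α :=
    hsb.trans (le_mul_of_one_le_left hα.le (Real.one_le_sqrt.mpr one_le_two))
  rw [← sub_le_iff_le_add', le_div_iff₀ (by positivity)]
  nlinarith [mul_nonneg (sub_nonneg.2 hac') (by linarith : 0 ≤ (1 + √2) * α - √a - √c),
    mul_nonneg (sub_nonneg.2 hsb) (sub_nonneg.2 hb'), Real.sq_sqrt ha0, Real.sq_sqrt hb0,
    Real.sq_sqrt (ha0.trans hac)]

lemma exists_ne_zero_forall_dotProduct_eq_zero {K ι n : Type*} [Field K] [Fintype ι] [Fintype n]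
    (v : ι → n → K) (h : Fintype.card ι < Fintype.card n) :
    ∃ w ≠ 0, ∀ i, v i ⬝ᵥ w = 0 := by
  have hker : LinearMap.ker (Matrix.of v).mulVecLin ≠ ⊥ :=
    LinearMap.ker_ne_bot_of_finrank_lt (by simpa using h)
  obtain ⟨w, hw, hw0⟩ := Submodule.exists_mem_ne_zero_of_ne_bot hker
  exact ⟨w, hw0, fun i => congrFun hw i⟩

namespace Matrix.IsHermitian

variable {n : Type*} [Fintype n] [DecidableEq n] {S : Matrix n n ℝ}

noncomputable def eigenCoords (hS : S.IsHermitian) (w : n → ℝ) : n → ℝ :=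
  star (hS.eigenvectorUnitary : Matrix n n ℝ) *ᵥ w

lemma eigenCoords_eq (hS : S.IsHermitian) (w : n → ℝ) :
    hS.eigenCoords w = (hS.eigenvectorUnitary : Matrix n n ℝ)ᵀ *ᵥ w := by
  rw [eigenCoords, star_eq_conjTranspose, conjTranspose_eq_transpose_of_trivial]

lemma dotProduct_mulVec_eq_sum (hS : S.IsHermitian) (w : n → ℝ) :
    w ⬝ᵥ (S *ᵥ w) = ∑ l, hS.eigenvalues l * hS.eigenCoords w l ^ 2 := by
  nth_rewrite 1 [hS.spectral_theorem, Unitary.conjStarAlgAut_apply]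
  rw [← mulVec_mulVec, ← mulVec_mulVec, dotProduct_mulVec, star_eq_conjTranspose,
    conjTranspose_eq_transpose_of_trivial, ← mulVec_transpose, ← eigenCoords_eq]
  simp only [dotProduct, mulVec_diagonal, Function.comp_apply, RCLike.ofReal_real_eq_id, id]
  exact Finset.sum_congr rfl fun l _ => by ring

lemma dotProduct_self_eq_sum (hS : S.IsHermitian) (w : n → ℝ) :
    w ⬝ᵥ w = ∑ l, hS.eigenCoords w l ^ 2 := by
  have hU : (hS.eigenvectorUnitary : Matrix n n ℝ) *
      (hS.eigenvectorUnitary : Matrix n n ℝ)ᵀ = 1 := by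
    simpa [star_eq_conjTranspose] using Unitary.coe_mul_star_self hS.eigenvectorUnitary
  simp only [sq]
  change w ⬝ᵥ w = hS.eigenCoords w ⬝ᵥ hS.eigenCoords w
  rw [eigenCoords_eq, dotProduct_mulVec, vecMul_transpose, mulVec_mulVec, hU, one_mulVec]

lemma le_dotProduct_mulVec (hS : S.IsHermitian) {β : ℝ} {w : n → ℝ}
    (h : ∀ l, hS.eigenCoords w l ≠ 0 → β ≤ hS.eigenvalues l) :
    β * (w ⬝ᵥ w) ≤ w ⬝ᵥ (S *ᵥ w) := by
  rw [hS.dotProduct_self_eq_sum, hS.dotProduct_mulVec_eq_sum, Finset.mul_sum]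
  refine Finset.sum_le_sum fun l _ => ?_
  by_cases hl : hS.eigenCoords w l = 0
  · simp [hl]
  · exact mul_le_mul_of_nonneg_right (h l hl) (sq_nonneg _)

lemma dotProduct_mulVec_le (hS : S.IsHermitian) {β : ℝ} {w : n → ℝ}
    (h : ∀ l, hS.eigenCoords w l ≠ 0 → hS.eigenvalues l ≤ β) :
    w ⬝ᵥ (S *ᵥ w) ≤ β * (w ⬝ᵥ w) := by
  rw [hS.dotProduct_self_eq_sum, hS.dotProduct_mulVec_eq_sum, Finset.mul_sum]
  refine Finset.sum_le_sum fun l _ => ?_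
  by_cases hl : hS.eigenCoords w l = 0
  · simp [hl]
  · exact mul_le_mul_of_nonneg_right (h l hl) (sq_nonneg _)

lemma eigenvalues_add_le {T : Matrix n n ℝ} (hS : S.IsHermitian) (hT : T.IsHermitian)
    (hST : (S + T).IsHermitian) {a b : ℝ} (ha : ∀ l, hS.eigenvalues l ≤ a)
    (hb : ∀ l, hT.eigenvalues l ≤ b) (l : n) : hST.eigenvalues l ≤ a + b := by
  set v : n → ℝ := ⇑(hST.eigenvectorBasis l)
  have hv : 0 < v ⬝ᵥ v := by
    simpa using dotProduct_star_self_pos_iff.2 <|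
      (WithLp.ofLp_eq_zero 2).ne.2 (hST.eigenvectorBasis.orthonormal.ne_zero l)
  refine le_of_mul_le_mul_right ?_ hv
  calc hST.eigenvalues l * (v ⬝ᵥ v) = v ⬝ᵥ ((S + T) *ᵥ v) := by
        rw [hST.mulVec_eigenvectorBasis, dotProduct_smul, smul_eq_mul]
    _ = v ⬝ᵥ (S *ᵥ v) + v ⬝ᵥ (T *ᵥ v) := by rw [add_mulVec, dotProduct_add]
    _ ≤ a * (v ⬝ᵥ v) + b * (v ⬝ᵥ v) := add_le_add (hS.dotProduct_mulVec_le fun l _ => ha l)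
        (hT.dotProduct_mulVec_le fun l _ => hb l)
    _ = (a + b) * (v ⬝ᵥ v) := by ring

theorem eigenvalues_sort_le_of_posSemidef_sub {d : ℕ} {S T : Matrix (Fin d) (Fin d) ℝ}
    (hS : S.IsHermitian) (hT : T.IsHermitian) (hST : (T - S).PosSemidef) (j : Fin d) :
    hS.eigenvalues (Tuple.sort hS.eigenvalues j) ≤
      hT.eigenvalues (Tuple.sort hT.eigenvalues j) := by
  set σ := Tuple.sort hS.eigenvalues
  set ρ := Tuple.sort hT.eigenvalues
  have hcard : Fintype.card {i : Fin d // i ≠ j} < Fintype.card (Fin d) := by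
    rw [Fintype.card_subtype_compl, Fintype.card_subtype_eq, Fintype.card_fin]
    exact Nat.sub_lt j.pos one_pos
  -- Courant–Fischer: `d - 1` linear conditions leave a nonzero `w` with no component along the
  -- eigenvectors of `S` sorted below `j`, nor along those of `T` sorted above `j`.
  obtain ⟨w, hw0, hw⟩ := exists_ne_zero_forall_dotProduct_eq_zero
    (fun i : {i // i ≠ j} => if (i : Fin d) < j
      then star (hS.eigenvectorUnitary : Matrix _ _ ℝ) (σ i)
      else star (hT.eigenvectorUnitary : Matrix _ _ ℝ) (ρ i)) hcard
  have hx : ∀ i < j, hS.eigenCoords w (σ i) = 0 := fun i hij => by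
    have := hw ⟨i, hij.ne⟩
    rwa [if_pos hij] at this
  have hy : ∀ i, j < i → hT.eigenCoords w (ρ i) = 0 := fun i hji => by
    have := hw ⟨i, hji.ne'⟩
    rwa [if_neg hji.not_gt] at this
  have hlow : hS.eigenvalues (σ j) * (w ⬝ᵥ w) ≤ w ⬝ᵥ (S *ᵥ w) :=
    hS.le_dotProduct_mulVec fun l hl => by
      obtain ⟨i, rfl⟩ := σ.surjective l
      exact Tuple.monotone_sort hS.eigenvalues (not_lt.1 fun hij => hl (hx i hij))
  have hup : w ⬝ᵥ (T *ᵥ w) ≤ hT.eigenvalues (ρ j) * (w ⬝ᵥ w) :=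
    hT.dotProduct_mulVec_le fun l hl => by
      obtain ⟨i, rfl⟩ := ρ.surjective l
      exact Tuple.monotone_sort hT.eigenvalues (not_lt.1 fun hji => hl (hy i hji))
  have hmid : w ⬝ᵥ (S *ᵥ w) ≤ w ⬝ᵥ (T *ᵥ w) := by
    have := hST.dotProduct_mulVec_nonneg w
    rw [star_trivial, sub_mulVec, dotProduct_sub] at this
    linarith
  have hw' : 0 < w ⬝ᵥ w := by simpa using dotProduct_star_self_pos_iff.2 hw0
  exact le_of_mul_le_mul_right (hlow.trans (hmid.trans hup)) hw'

end Matrix.IsHermitian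

lemma sum_sqrt_add_sum_sqrt_sub_sum_sqrt_le {ι : Type*} [Fintype ι] {a b c : ι → ℝ} {α : ℝ}
    (hα : 0 < α) (ha0 : ∀ j, 0 ≤ a j) (hb0 : ∀ j, 0 ≤ b j) (ha : ∀ j, a j ≤ α ^ 2)
    (hb : ∀ j, b j ≤ α ^ 2) (hac : ∀ j, a j ≤ c j) (hc : ∀ j, c j ≤ 2 * α ^ 2)
    (hsum : ∑ j, c j = ∑ j, a j + ∑ j, b j) :
    ∑ j, √(a j) + ∑ j, √(b j) - ∑ j, √(c j) ≤ (2 - √2) * α * Fintype.card ι := by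
  calc ∑ j, √(a j) + ∑ j, √(b j) - ∑ j, √(c j) = ∑ j, (√(a j) + √(b j) - √(c j)) := by
        rw [Finset.sum_sub_distrib, Finset.sum_add_distrib]
    _ ≤ ∑ j, ((2 - √2) * α + (a j + b j - c j) / ((1 + √2) * α)) :=
        Finset.sum_le_sum fun j _ => sqrt_add_sqrt_sub_sqrt_le hα (ha0 j) (hb0 j) (ha j) (hb j)
          (hac j) (hc j)
    _ = (2 - √2) * α * Fintype.card ι := by
        rw [Finset.sum_add_distrib, ← Finset.sum_div, Finset.sum_sub_distrib,
          Finset.sum_add_distrib, hsum, sub_self, zero_div, add_zero, Finset.sum_const,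
          Finset.card_univ, nsmul_eq_mul, mul_comm]

lemma eigenvalues_le_sq_of_singularValues_le {d : ℕ} {n : Type*} [Fintype n]
    {M : Matrix (Fin d) n ℝ} {α : ℝ} (hα : 0 ≤ α) (h : ∀ j, singularValues M j ≤ α)
    (j : Fin d) :
    (isHermitian_mul_conjTranspose_self M).eigenvalues j ≤ α ^ 2 :=
  (Real.sqrt_le_left hα).1 (h j)

lemma nuclearNorm_fromCols {d : ℕ} {n m : Type*} [Fintype n] [Fintype m]
    (A : Matrix (Fin d) n ℝ) (B : Matrix (Fin d) m ℝ) :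
    nuclearNorm (fromCols A B) = ∑ j, √(((isHermitian_mul_conjTranspose_self A).add
      (isHermitian_mul_conjTranspose_self B)).eigenvalues j) := by
  have hprod : fromCols A B * (fromCols A B)ᴴ = A * Aᴴ + B * Bᴴ := by
    rw [conjTranspose_fromCols_eq_fromRows_conjTranspose, fromCols_mul_fromRows]
  unfold nuclearNorm singularValues
  rw [(IsHermitian.eigenvalues_eq_eigenvalues_iff _ _).2 (congrArg charpoly hprod)]

theorem nuclearNorm_add_nuclearNorm_sub_nuclearNorm_fromCols_le {d : ℕ} {n m : Type*}
    [Fintype n] [Fintype m] (A : Matrix (Fin d) n ℝ) (B : Matrix (Fin d) m ℝ) {α : ℝ}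
    (hα : 0 < α) (hA : ∀ j, singularValues A j ≤ α) (hB : ∀ j, singularValues B j ≤ α) :
    nuclearNorm A + nuclearNorm B - nuclearNorm (fromCols A B) ≤ (2 - √2) * α * d := by
  set hS := isHermitian_mul_conjTranspose_self A
  set hT := isHermitian_mul_conjTranspose_self B
  set hC := hS.add hT
  set σ := Tuple.sort hS.eigenvalues
  set ρ := Tuple.sort hC.eigenvalues
  have hSα := eigenvalues_le_sq_of_singularValues_le hα.le hA
  have hTα := eigenvalues_le_sq_of_singularValues_le hα.le hB
  have hCS : (A * Aᴴ + B * Bᴴ - A * Aᴴ).PosSemidef := by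
    rw [add_sub_cancel_left]
    exact posSemidef_self_mul_conjTranspose B
  have htrace : ∑ l, hC.eigenvalues l = ∑ l, hS.eigenvalues l + ∑ l, hT.eigenvalues l := by
    have := hC.trace_eq_sum_eigenvalues
    rw [trace_add, hS.trace_eq_sum_eigenvalues, hT.trace_eq_sum_eigenvalues] at this
    simpa using this.symm
  have hA' : nuclearNorm A = ∑ j, √(hS.eigenvalues (σ j)) := (Equiv.sum_comp σ _).symm
  have hC' : nuclearNorm (fromCols A B) = ∑ j, √(hC.eigenvalues (ρ j)) :=
    (nuclearNorm_fromCols A B).trans (Equiv.sum_comp ρ _).symm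
  have hB' : nuclearNorm B = ∑ j, √(hT.eigenvalues j) := rfl
  rw [hA', hB', hC']
  simpa only [Fintype.card_fin] using sum_sqrt_add_sum_sqrt_sub_sum_sqrt_le hα
    (fun _ => eigenvalues_self_mul_conjTranspose_nonneg A _)
    (eigenvalues_self_mul_conjTranspose_nonneg B) (fun _ => hSα _) hTα
    (hS.eigenvalues_sort_le_of_posSemidef_sub hC hCS)
    (fun j => (hS.eigenvalues_add_le hT hC hSα hTα _).trans_eq (two_mul _).symm)
    (by rw [Equiv.sum_comp ρ hC.eigenvalues, Equiv.sum_comp σ hS.eigenvalues, htrace])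

theorem transferability_objective_bounded_general {d k : ℕ} {ns nt : Fin k → ℕ} {α lam : ℝ}
    (Zs : ∀ i : Fin k, Matrix (Fin d) (Fin (ns i)) ℝ)
    (Zt : ∀ i : Fin k, Matrix (Fin d) (Fin (nt i)) ℝ)
    (hα : 0 < α) (hlam : 0 ≤ lam)
    (hs : ∀ i j, singularValues (Zs i) j ≤ α)
    (ht : ∀ i j, singularValues (Zt i) j ≤ α) :
    lam * ∑ i, (nuclearNorm (Zs i) + nuclearNorm (Zt i) -
        nuclearNorm (Matrix.fromCols (Zs i) (Zt i))) ≤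
      lam * ((2 - Real.sqrt 2) * α * k * d) := by
  refine mul_le_mul_of_nonneg_left ?_ hlam
  calc ∑ i, (nuclearNorm (Zs i) + nuclearNorm (Zt i) - nuclearNorm (fromCols (Zs i) (Zt i)))
      ≤ ∑ _i : Fin k, (2 - √2) * α * d := Finset.sum_le_sum fun i _ =>
        nuclearNorm_add_nuclearNorm_sub_nuclearNorm_fromCols_le (Zs i) (Zt i) hα (hs i) (ht i)
    _ = (2 - √2) * α * k * d := by
        rw [Finset.sum_const, Finset.card_univ, Fintype.card_fin, nsmul_eq_mul]
        ring

theorem transferability_objective_bounded {d k : ℕ} {ns nt : Fin k → ℕ} {α lam : ℝ}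
    (Zs : ∀ i : Fin k, Matrix (Fin d) (Fin (ns i)) ℝ)
    (Zt : ∀ i : Fin k, Matrix (Fin d) (Fin (nt i)) ℝ)
    (hdn : ∀ i, d ≤ ns i) (hdm : ∀ i, d ≤ nt i) (hα : 0 < α) (hlam : 0 ≤ lam)
    (hs : ∀ i j, singularValues (Zs i) j ≤ α)
    (ht : ∀ i j, singularValues (Zt i) j ≤ α) :
    lam * ∑ i, (nuclearNorm (Zs i) + nuclearNorm (Zt i) -
        nuclearNorm (Matrix.fromCols (Zs i) (Zt i))) ≤
      lam * ((2 - Real.sqrt 2) * α * k * d) :=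
  transferability_objective_bounded_general Zs Zt hα hlam hs ht
end
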